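/- Let P be a finite poset, k a field, and Q a full subposet of P with inclusion ι : Q ↪ P. Let M be a persistence module over Q with End(M) ≅ k (a brick), and let X be a persistence module over P. Then X ≅ Θ(M) if and only if the following three conditions hold: (i) Res(X) ≅ M; (ii) for every proper subobject Y of X, Res(Y) ≇ M; (iii) for every proper quotient Z of X, Res(Z) ≇ M. -/

import Mathlib

open CategoryTheory CategoryTheory.Limits

attribute [local instance] CategoryTheory.Limits.HasFiniteBiproducts.of_hasFiniteProducts

section Posets

variable {P : Type} [PartialOrder P]

/-- Zigzag connectivity of two elements of a subset `S` of a poset: they are linked by a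
zigzag of comparable pairs inside `S`. -/
def ZigzagConnIn (S : Set P) (a b : S) : Prop :=
  Relation.ReflTransGen (fun u v : S => (u : P) ≤ v ∨ (v : P) ≤ u) a b

/-- A subset of a poset is convex if `x ≤ z ≤ y` with `x, y` in the subset implies `z` is. -/
def IsConvex (S : Set P) : Prop :=
  ∀ ⦃x y z : P⦄, x ∈ S → y ∈ S → x ≤ z → z ≤ y → z ∈ S

/-- An interval of a poset: a nonempty, convex, zigzag-connected subset. -/
def IsIntervalSet (S : Set P) : Prop :=
  S.Nonempty ∧ IsConvex S ∧ ∀ a b : S, ZigzagConnIn S a b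

end Posets

section IntervalModules

variable (k : Type) [Field k] {P : Type} [PartialOrder P]

open Classical in
/-- The linear map between the fibers of the interval module. -/
noncomputable def intervalModuleAux (S : Set P) (p q : P) :
    ↥(if p ∈ S then (⊤ : Submodule k k) else ⊥) →ₗ[k]
      ↥(if q ∈ S then (⊤ : Submodule k k) else ⊥) where
  toFun x := ⟨(if p ∈ S ∧ q ∈ S then (1 : k) else 0) * x.1, by
    by_cases hq : q ∈ S
    · rw [if_pos hq]; exact Submodule.mem_top
    · rw [if_neg hq, if_neg (fun h => hq h.2), zero_mul]; exact Submodule.zero_mem _⟩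
  map_add' x y := by ext; simp [mul_add]
  map_smul' c x := by ext; simp

open Classical in
/-- The interval module `k_S` associated to a convex subset `S` of a poset `P`:
it is `k` at points of `S`, `0` elsewhere, with identity structure maps inside `S`. -/
noncomputable def intervalModule (S : Set P) (hS : IsConvex S) : P ⥤ ModuleCat.{0} k where
  obj p := ModuleCat.of k ↥(if p ∈ S then (⊤ : Submodule k k) else ⊥)
  map {p q} _ := ModuleCat.ofHom (intervalModuleAux k S p q)
  map_id p := by
    apply ModuleCat.hom_ext
    apply LinearMap.ext
    rintro ⟨x, hx⟩
    apply Subtype.ext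
    show (if p ∈ S ∧ p ∈ S then (1 : k) else 0) * x = x
    by_cases hp : p ∈ S
    · simp [hp]
    · rw [if_neg hp] at hx
      simp [hp, (Submodule.mem_bot k).mp hx]
  map_comp {p q r} f g := by
    apply ModuleCat.hom_ext
    apply LinearMap.ext
    rintro ⟨x, hx⟩
    apply Subtype.ext
    show (if p ∈ S ∧ r ∈ S then (1 : k) else 0) * x
      = (if q ∈ S ∧ r ∈ S then (1 : k) else 0) * ((if p ∈ S ∧ q ∈ S then (1 : k) else 0) * x)
    by_cases hp : p ∈ S
    · by_cases hr : r ∈ S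
      · have hq : q ∈ S := hS hp hr (leOfHom f) (leOfHom g)
        simp [hp, hq, hr]
      · simp [hr]
    · rw [if_neg hp] at hx
      simp [(Submodule.mem_bot k).mp hx]

/-- A persistence module is an interval module if it is isomorphic to `k_S` for some
interval `S`. -/
def IsIntervalModule (M : P ⥤ ModuleCat.{0} k) : Prop :=
  ∃ (S : Set P) (hS : IsIntervalSet S), Nonempty (M ≅ intervalModule k S hS.2.1)

/-- A persistence module is interval-decomposable if it is isomorphic to a finite direct sum
of interval modules. -/
def IsIntervalDecomposable (M : P ⥤ ModuleCat.{0} k) : Prop :=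
  ∃ (n : ℕ) (J : Fin n → (P ⥤ ModuleCat.{0} k)),
    (∀ i, IsIntervalModule k (J i)) ∧ Nonempty (M ≅ ⨁ J)

/-- The support of a persistence module. -/
def moduleSupport (M : P ⥤ ModuleCat.{0} k) : Set P := {p : P | ¬ IsZero (M.obj p)}

/-- A persistence module valued in finite-dimensional vector spaces. -/
def PointwiseFinite (M : P ⥤ ModuleCat.{0} k) : Prop :=
  ∀ p : P, FiniteDimensional k (M.obj p)

end IntervalModules

section Approximations

variable {C : Type*} [Category C]

/-- `f : X ⟶ M` is a right `𝒳`-approximation of `M` if `X ∈ 𝒳` and every morphism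
from an object of `𝒳` to `M` factors through `f`. -/
def IsRightApproximation (𝒳 : C → Prop) {X M : C} (f : X ⟶ M) : Prop :=
  𝒳 X ∧ ∀ ⦃Y : C⦄ (g : Y ⟶ M), 𝒳 Y → ∃ h : Y ⟶ X, h ≫ f = g

/-- `f : X ⟶ M` is right minimal if every endomorphism `g` of `X` with `f ∘ g = f`
is an isomorphism. -/
def IsRightMinimal {X M : C} (f : X ⟶ M) : Prop :=
  ∀ g : X ⟶ X, g ≫ f = f → IsIso g

end Approximations

/-- An interval cover: a right minimal approximation by interval-decomposable modules. -/
def IsIntervalCover (k : Type) [Field k] {P : Type} [PartialOrder P]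
    {X M : P ⥤ ModuleCat.{0} k} (f : X ⟶ M) : Prop :=
  IsRightApproximation (IsIntervalDecomposable k) f ∧ IsRightMinimal f

section Resolutions

variable {C : Type*} [Category C] [Limits.HasZeroMorphisms C]

/-- `M` admits a resolution `0 ⟶ J_n ⟶ ⋯ ⟶ J_1 ⟶ J_0 ⟶ M ⟶ 0` of length `n` by objects
of `𝒳`: an exact sequence in which every `J_i` lies in `𝒳`.  (The data is encoded by an
`ℕ`-indexed complex which vanishes in degrees `> n` and is exact everywhere.) -/
def HasResolutionOfLength (𝒳 : C → Prop) (n : ℕ) (M : C) : Prop :=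
  ∃ (J : ℕ → C) (d : ∀ i, J (i + 1) ⟶ J i) (f : J 0 ⟶ M) (w0 : d 0 ≫ f = 0)
    (w : ∀ i, d (i + 1) ≫ d i = 0),
    (∀ i, i ≤ n → 𝒳 (J i)) ∧ (∀ i, n < i → IsZero (J i)) ∧
    Epi f ∧ (ShortComplex.mk (d 0) f w0).Exact ∧
    ∀ i, (ShortComplex.mk (d (i + 1)) (d i) (w i)).Exact

end Resolutions

section KanTheta

variable (k : Type) [Field k] {P : Type} [PartialOrder P] (Q : Set P)

/-- The restriction functor along the inclusion `ι : Q ↪ P` of a full subposet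
(precomposition with `ι`). -/
noncomputable def resFunctor : (P ⥤ ModuleCat.{0} k) ⥤ (↥Q ⥤ ModuleCat.{0} k) :=
  (CategoryTheory.Functor.whiskeringLeft _ _ _).obj (Subtype.mono_coe (· ∈ Q)).functor

variable (L R : (↥Q ⥤ ModuleCat.{0} k) ⥤ (P ⥤ ModuleCat.{0} k))
variable (adjL : L ⊣ resFunctor k Q) (adjR : resFunctor k Q ⊣ R)

/-- The canonical morphism `θ_M : Lan(M) ⟶ Ran(M)` corresponding to the identity of `M`
under the adjunction isomorphisms
`Hom(Lan M, Ran M) ≅ Hom(M, Res (Ran M)) ≅ Hom(M, M)`. -/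
noncomputable def thetaHom [IsIso adjR.counit] (M : ↥Q ⥤ ModuleCat.{0} k) :
    L.obj M ⟶ R.obj M :=
  (adjL.homEquiv M (R.obj M)).symm ((asIso adjR.counit).inv.app M)

lemma thetaHom_naturality [IsIso adjR.counit] {M N : ↥Q ⥤ ModuleCat.{0} k} (f : M ⟶ N) :
    L.map f ≫ thetaHom k Q L R adjL adjR N = thetaHom k Q L R adjL adjR M ≫ R.map f := by
  dsimp [thetaHom]
  rw [← Adjunction.homEquiv_naturality_left_symm, ← Adjunction.homEquiv_naturality_right_symm]
  congr 1
  simpa using ((asIso adjR.counit).inv.naturality f)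

/-- The functor `Θ`, sending `M` to the image of `θ_M : Lan(M) ⟶ Ran(M)`. -/
noncomputable def Theta [IsIso adjR.counit] :
    (↥Q ⥤ ModuleCat.{0} k) ⥤ (P ⥤ ModuleCat.{0} k) where
  obj M := image (thetaHom k Q L R adjL adjR M)
  map {M N} f := image.map (Arrow.homMk' _ _ (thetaHom_naturality k Q L R adjL adjR f))
  map_id M := by
    have h : Arrow.homMk' _ _ (thetaHom_naturality k Q L R adjL adjR (𝟙 M)) =
        𝟙 (Arrow.mk (thetaHom k Q L R adjL adjR M)) :=
      Arrow.hom_ext _ _ (by simp) (by simp)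
    show image.map (Arrow.homMk' _ _ (thetaHom_naturality k Q L R adjL adjR (𝟙 M))) =
      𝟙 (image (thetaHom k Q L R adjL adjR M))
    rw [h, image.map_id]
    rfl
  map_comp {M N O} f g := by
    have h : Arrow.homMk' _ _ (thetaHom_naturality k Q L R adjL adjR (f ≫ g)) =
        Arrow.homMk' _ _ (thetaHom_naturality k Q L R adjL adjR f) ≫
          Arrow.homMk' _ _ (thetaHom_naturality k Q L R adjL adjR g) :=
      Arrow.hom_ext _ _ (by simp) (by simp)
    show image.map (Arrow.homMk' _ _ (thetaHom_naturality k Q L R adjL adjR (f ≫ g))) =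
      image.map (Arrow.homMk' _ _ (thetaHom_naturality k Q L R adjL adjR f)) ≫
        image.map (Arrow.homMk' _ _ (thetaHom_naturality k Q L R adjL adjR g))
    rw [h, image.map_comp]

end KanTheta

/-!
If `Res X ≅ M`, the isomorphism and its inverse are adjoint to morphisms `α : Lan M ⟶ X` and
`β : X ⟶ Ran M` with `α ≫ β = θ_M` and `Res α`, `Res β` invertible. The image of `α` and the
coimage of `β` then also restrict to `M`, so minimality of `X` makes `α` epi and `β` mono, and `X`
is the image of `θ_M`.

Conversely, every morphism `Lan M ⟶ Ran M` is `Lan c ≫ θ_M` for some `c ∈ End M`. For a subobject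
`Y ⊆ Θ(M)` with `Res Y ≅ M`, the composite `Lan M ⟶ Y ⟶ Θ(M) ⟶ Ran M` has a monomorphic `c`,
which is invertible because `M` is a brick; hence `Lan M ⟶ Y ⟶ Θ(M)` is epi and `Y = Θ(M)`.
Quotients are dual.
-/

section Brick

variable {C : Type*} [Category C] [Preadditive C] {K : Type*} [DivisionRing K] {M : C}

lemma isIso_of_ne_zero_of_endRingEquiv (e : End M ≃+* K) {c : M ⟶ M} (hc : c ≠ 0) :
    IsIso c := by
  rw [← isUnit_iff_isIso, ← isUnit_map_iff e, isUnit_iff_ne_zero, e.map_ne_zero_iff]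
  exact hc

lemma not_isZero_of_endRingEquiv (e : End M ≃+* K) : ¬ IsZero M := fun hM =>
  one_ne_zero (e.symm.injective (by simpa using hM.eq_of_src (𝟙 M) 0))

lemma isIso_of_mono_of_endRingEquiv (e : End M ≃+* K) (c : M ⟶ M) [Mono c] : IsIso c :=
  isIso_of_ne_zero_of_endRingEquiv e fun h =>
    not_isZero_of_endRingEquiv e (by subst h; exact IsZero.of_mono_zero M M)

lemma isIso_of_epi_of_endRingEquiv (e : End M ≃+* K) (c : M ⟶ M) [Epi c] : IsIso c :=
  isIso_of_ne_zero_of_endRingEquiv e fun h =>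
    not_isZero_of_endRingEquiv e (by subst h; exact IsZero.of_epi_zero M M)

end Brick

lemma isIso_of_epi_of_isIso_comp {C : Type*} [Category C] {A B D : C} (p : A ⟶ B) (i : B ⟶ D)
    [Epi p] [IsIso (p ≫ i)] : IsIso p :=
  have : IsSplitMono p :=
    IsSplitMono.mk' ⟨i ≫ inv (p ≫ i), by rw [← Category.assoc, IsIso.hom_inv_id]⟩
  isIso_of_epi_of_isSplitMono p

section MinimalLift

variable {C D : Type*} [Category C] [Category D]

/-- Conditions (i)–(iii) of the theorem, with restriction replaced by an arbitrary functor `F`. -/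
def IsMinimalLift (F : D ⥤ C) (M : C) (X : D) : Prop :=
  Nonempty (F.obj X ≅ M) ∧
    (∀ (Y : D) (m : Y ⟶ X), Mono m → ¬ IsIso m → ¬ Nonempty (F.obj Y ≅ M)) ∧
    (∀ (Z : D) (e : X ⟶ Z), Epi e → ¬ IsIso e → ¬ Nonempty (F.obj Z ≅ M))

variable {F : D ⥤ C} {M : C} {X X' : D}

lemma IsMinimalLift.of_iso (h : IsMinimalLift F M X) (i : X ≅ X') : IsMinimalLift F M X' := by
  obtain ⟨⟨φ⟩, hsub, hquot⟩ := h
  refine ⟨⟨F.mapIso i.symm ≪≫ φ⟩, fun Y m _ hm => hsub Y (m ≫ i.inv) inferInstance ?_,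
    fun Z e _ he => hquot Z (i.hom ≫ e) inferInstance ?_⟩
  · exact fun _ => hm (by simpa using (inferInstance : IsIso ((m ≫ i.inv) ≫ i.hom)))
  · exact fun _ => he (by simpa using (inferInstance : IsIso (i.inv ≫ i.hom ≫ e)))

variable [HasImages D] [HasEqualizers D] [F.PreservesEpimorphisms]

lemma isIso_map_factorThruImage {A B : D} (f : A ⟶ B) [IsIso (F.map f)] :
    IsIso (F.map (factorThruImage f)) := by
  have : IsIso (F.map (factorThruImage f) ≫ F.map (image.ι f)) := by
    rwa [← F.map_comp, image.fac]
  exact isIso_of_epi_of_isIso_comp _ (F.map (image.ι f))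

lemma isIso_map_image_ι {A B : D} (f : A ⟶ B) [IsIso (F.map f)] : IsIso (F.map (image.ι f)) := by
  have := isIso_map_factorThruImage (F := F) f
  have : IsIso (F.map (factorThruImage f) ≫ F.map (image.ι f)) := by
    rwa [← F.map_comp, image.fac]
  exact IsIso.of_isIso_comp_left (F.map (factorThruImage f)) _

lemma IsMinimalLift.epi_of_isIso_map (h : IsMinimalLift F M X) {A : D} (f : A ⟶ X)
    [IsIso (F.map f)] : Epi f := by
  have := isIso_map_image_ι (F := F) f
  have : IsIso (image.ι f) := by
    by_contra hι
    obtain ⟨φ⟩ := h.1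
    exact h.2.1 _ (image.ι f) inferInstance hι ⟨asIso (F.map (image.ι f)) ≪≫ φ⟩
  rw [← image.fac f]
  infer_instance

lemma IsMinimalLift.mono_of_isIso_map (h : IsMinimalLift F M X) {B : D} (f : X ⟶ B)
    [IsIso (F.map f)] : Mono f := by
  have := isIso_map_factorThruImage (F := F) f
  have : IsIso (factorThruImage f) := by
    by_contra hπ
    obtain ⟨φ⟩ := h.1
    exact h.2.2 _ (factorThruImage f) inferInstance hπ
      ⟨(asIso (F.map (factorThruImage f))).symm ≪≫ φ⟩
  rw [← image.fac f]
  infer_instance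

end MinimalLift

section Theta

variable {k : Type} [Field k] {P : Type} [PartialOrder P] {Q : Set P}
  {L R : (↥Q ⥤ ModuleCat.{0} k) ⥤ (P ⥤ ModuleCat.{0} k)}
  (adjL : L ⊣ resFunctor k Q) (adjR : resFunctor k Q ⊣ R) [IsIso adjR.counit]
  (M : ↥Q ⥤ ModuleCat.{0} k)

lemma homEquiv_thetaHom :
    adjL.homEquiv M (R.obj M) (thetaHom k Q L R adjL adjR M) = inv (adjR.counit.app M) := by
  rw [thetaHom, Equiv.apply_symm_apply]
  simp

lemma unit_comp_map_thetaHom_comp_counit :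
    adjL.unit.app M ≫ (resFunctor k Q).map (thetaHom k Q L R adjL adjR M) ≫
      adjR.counit.app M = 𝟙 M := by
  have h := homEquiv_thetaHom adjL adjR M
  rw [Adjunction.homEquiv_unit] at h
  rw [← Category.assoc, h]
  exact IsIso.inv_hom_id _

/-- Through the adjunctions, `Hom(Lan M, Ran M) ≃ End M`, and `θ_M` corresponds to `𝟙 M`. -/
lemma eq_map_comp_thetaHom (f : L.obj M ⟶ R.obj M) :
    f = L.map (adjL.unit.app M ≫ (resFunctor k Q).map f ≫ adjR.counit.app M) ≫
      thetaHom k Q L R adjL adjR M := by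
  apply (adjL.homEquiv M (R.obj M)).injective
  rw [Adjunction.homEquiv_naturality_left]
  simp only [Functor.id_obj]
  rw [homEquiv_thetaHom, Adjunction.homEquiv_unit]
  simp

lemma isIso_map_thetaHom [IsIso adjL.unit] :
    IsIso ((resFunctor k Q).map (thetaHom k Q L R adjL adjR M)) := by
  have : IsIso (adjL.unit.app M ≫ (resFunctor k Q).map (thetaHom k Q L R adjL adjR M) ≫
      adjR.counit.app M) := by
    rw [unit_comp_map_thetaHom_comp_counit]
    exact IsIso.id M
  have : IsIso ((resFunctor k Q).map (thetaHom k Q L R adjL adjR M) ≫ adjR.counit.app M) :=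
    IsIso.of_isIso_comp_left (adjL.unit.app M) _
  exact IsIso.of_isIso_comp_right _ (adjR.counit.app M)

variable {K : Type*} [DivisionRing K]

local notation "θ" => thetaHom k Q L R adjL adjR M

lemma epi_of_mono_of_resFunctor_obj_iso (e : End M ≃+* K) {Y : P ⥤ ModuleCat.{0} k}
    (m : Y ⟶ image θ) [Mono m] (ψ : (resFunctor k Q).obj Y ≅ M) : Epi m := by
  have := adjL.isRightAdjoint
  set g : L.obj M ⟶ Y := (adjL.homEquiv M Y).symm ψ.inv
  have hg : adjL.unit.app M ≫ (resFunctor k Q).map g = ψ.inv := by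
    have h := (adjL.homEquiv M Y).apply_symm_apply ψ.inv
    rwa [Adjunction.homEquiv_unit] at h
  set c := adjL.unit.app M ≫ (resFunctor k Q).map (g ≫ m ≫ image.ι θ) ≫ adjR.counit.app M
  have : Mono c := by
    simp only [c, Functor.map_comp, ← Category.assoc, hg]
    infer_instance
  have := isIso_of_mono_of_endRingEquiv e c
  have hgm : g ≫ m = L.map c ≫ factorThruImage θ := by
    rw [← cancel_mono (image.ι θ), Category.assoc, Category.assoc, image.fac]
    exact eq_map_comp_thetaHom adjL adjR M _
  have : Epi (g ≫ m) := by rw [hgm]; infer_instance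
  exact epi_of_epi g m

lemma mono_of_epi_of_resFunctor_obj_iso [IsIso adjL.unit] (e : End M ≃+* K)
    {Z : P ⥤ ModuleCat.{0} k} (q : image θ ⟶ Z) [Epi q] (ψ : (resFunctor k Q).obj Z ≅ M) :
    Mono q := by
  have := adjR.isLeftAdjoint
  set g : Z ⟶ R.obj M := adjR.homEquiv Z M ψ.hom
  have hg : (resFunctor k Q).map g ≫ adjR.counit.app M = ψ.hom := by
    have h := (adjR.homEquiv Z M).symm_apply_apply ψ.hom
    rwa [Adjunction.homEquiv_counit] at h
  set c := adjL.unit.app M ≫ (resFunctor k Q).map (factorThruImage θ ≫ q ≫ g) ≫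
    adjR.counit.app M
  have : Epi c := by
    simp only [c, Functor.map_comp, Category.assoc, hg]
    infer_instance
  have := isIso_of_epi_of_endRingEquiv e c
  have hqg : q ≫ g = image.ι θ ≫ R.map c := by
    rw [← cancel_epi (factorThruImage θ), ← Category.assoc (factorThruImage θ) (image.ι θ),
      image.fac, ← thetaHom_naturality]
    exact eq_map_comp_thetaHom adjL adjR M _
  have : Mono (q ≫ g) := by rw [hqg]; infer_instance
  exact mono_of_mono q g

lemma isMinimalLift_image_thetaHom [IsIso adjL.unit] (e : End M ≃+* K) :
    IsMinimalLift (resFunctor k Q) M (image θ) := by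
  have := adjR.isLeftAdjoint
  have := isIso_map_thetaHom adjL adjR M
  have := isIso_map_image_ι (F := resFunctor k Q) θ
  refine ⟨⟨asIso ((resFunctor k Q).map (image.ι θ)) ≪≫ asIso (adjR.counit.app M)⟩,
    fun Y m _ hm ⟨ψ⟩ => hm ?_, fun Z q _ hq ⟨ψ⟩ => hq ?_⟩
  · have := epi_of_mono_of_resFunctor_obj_iso adjL adjR M e m ψ
    exact isIso_of_mono_of_epi m
  · have := mono_of_epi_of_resFunctor_obj_iso adjL adjR M e q ψ
    exact isIso_of_mono_of_epi q

lemma IsMinimalLift.nonempty_iso_image_thetaHom [IsIso adjL.unit] {X : P ⥤ ModuleCat.{0} k}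
    (h : IsMinimalLift (resFunctor k Q) M X) : Nonempty (X ≅ image θ) := by
  have := adjR.isLeftAdjoint
  obtain ⟨φ⟩ := h.1
  set α : L.obj M ⟶ X := (adjL.homEquiv M X).symm φ.inv
  set β : X ⟶ R.obj M := adjR.homEquiv X M φ.hom
  have hα : adjL.unit.app M ≫ (resFunctor k Q).map α = φ.inv := by
    have h := (adjL.homEquiv M X).apply_symm_apply φ.inv
    rwa [Adjunction.homEquiv_unit] at h
  have hβ : (resFunctor k Q).map β ≫ adjR.counit.app M = φ.hom := by
    have h := (adjR.homEquiv X M).symm_apply_apply φ.hom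
    rwa [Adjunction.homEquiv_counit] at h
  have hαβ : α ≫ β = θ := by
    have hc : adjL.unit.app M ≫ (resFunctor k Q).map (α ≫ β) ≫ adjR.counit.app M = 𝟙 M := by
      rw [Functor.map_comp, Category.assoc, hβ, ← Category.assoc, hα, Iso.inv_hom_id]
      rfl
    rw [eq_map_comp_thetaHom adjL adjR M (α ≫ β), hc]
    simp
  have : IsIso ((resFunctor k Q).map α) := by
    rw [show (resFunctor k Q).map α = inv (adjL.unit.app M) ≫ φ.inv by simp [← hα]]
    infer_instance
  have : IsIso ((resFunctor k Q).map β) := by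
    rw [show (resFunctor k Q).map β = φ.hom ≫ inv (adjR.counit.app M) by simp [← hβ]]
    infer_instance
  have := h.epi_of_isIso_map α
  have := h.mono_of_isIso_map β
  have := strongEpi_of_epi α
  exact ⟨image.isoStrongEpiMono α β hαβ⟩

end Theta

theorem Theta_characterization
    (k : Type) [Field k] (P : Type) [PartialOrder P] (Q : Set P)
    (L R : (↥Q ⥤ ModuleCat.{0} k) ⥤ (P ⥤ ModuleCat.{0} k))
    (adjL : L ⊣ resFunctor k Q) (adjR : resFunctor k Q ⊣ R)
    [IsIso adjL.unit] [IsIso adjR.counit]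
    (M : ↥Q ⥤ ModuleCat.{0} k)
    (hbrick : Nonempty (CategoryTheory.End M ≃+* k))
    (X : P ⥤ ModuleCat.{0} k) :
    Nonempty (X ≅ (Theta k Q L R adjL adjR).obj M) ↔
      (Nonempty ((resFunctor k Q).obj X ≅ M) ∧
       (∀ (Y : P ⥤ ModuleCat.{0} k) (m : Y ⟶ X), Mono m → ¬ IsIso m →
         ¬ Nonempty ((resFunctor k Q).obj Y ≅ M)) ∧
       (∀ (Z : P ⥤ ModuleCat.{0} k) (e : X ⟶ Z), Epi e → ¬ IsIso e →
         ¬ Nonempty ((resFunctor k Q).obj Z ≅ M))) := by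
  obtain ⟨e⟩ := hbrick
  refine ⟨fun ⟨i⟩ => ?_, fun h => IsMinimalLift.nonempty_iso_image_thetaHom adjL adjR M h⟩
  exact (isMinimalLift_image_thetaHom adjL adjR M e).of_iso i.symm
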